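/- Conservation of the fifth Kruskal invariant for periodic KdV: let ε ∈ ℝ, P > 0, and let u : ℝ × ℝ → ℝ be smooth, satisfy u(x + P, t) = u(x, t) for all x and t, and solve ∂ₜu + u ∂ₓu + ε² ∂ₓ³u = 0 everywhere. Then 𝒬₅(t) = ∫₀ᴾ ( u⁵/5 − 6ε² u² (∂ₓu)² + (36ε⁴/5) u (∂ₓ²u)² − (108ε⁶/35)(∂ₓ³u)² ) dx is constant in t. -/

import Mathlib

open MeasureTheory intervalIntegral

noncomputable def pd (v : ℝ × ℝ) (f : ℝ × ℝ → ℝ) (q : ℝ × ℝ) : ℝ := fderiv ℝ f q v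

lemma pd_contDiff {f : ℝ × ℝ → ℝ} (hf : ContDiff ℝ (⊤ : ℕ∞) f) (v : ℝ × ℝ) :
    ContDiff ℝ (⊤ : ℕ∞) (pd v f) :=
  (hf.fderiv_right (by simp)).clm_apply contDiff_const

lemma hasDerivAt_slice_x {f : ℝ × ℝ → ℝ} {x t : ℝ} (hf : DifferentiableAt ℝ f (x, t)) :
    HasDerivAt (fun x' => f (x', t)) (pd (1, 0) f (x, t)) x := by
  have h1 : HasDerivAt (fun x' : ℝ => ((x', t) : ℝ × ℝ)) (1, 0) x :=
    (hasDerivAt_id x).prodMk (hasDerivAt_const x t)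
  exact hf.hasFDerivAt.comp_hasDerivAt x h1

lemma hasDerivAt_slice_t {f : ℝ × ℝ → ℝ} {x t : ℝ} (hf : DifferentiableAt ℝ f (x, t)) :
    HasDerivAt (fun t' => f (x, t')) (pd (0, 1) f (x, t)) t := by
  have h1 : HasDerivAt (fun t' : ℝ => ((x, t') : ℝ × ℝ)) (0, 1) t :=
    (hasDerivAt_const t x).prodMk (hasDerivAt_id t)
  exact hf.hasFDerivAt.comp_hasDerivAt t h1

lemma pd_comm {f : ℝ × ℝ → ℝ} (hf : ContDiff ℝ (⊤ : ℕ∞) f) (v w q) :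
    pd v (pd w f) q = pd w (pd v f) q := by
  have hdf : Differentiable ℝ f := hf.differentiable (by simp)
  have hdf' : DifferentiableAt ℝ (fderiv ℝ f) q :=
    (hf.fderiv_right (m := (⊤ : ℕ∞)) (by simp)).differentiable (by simp) q
  have key : ∀ a b : ℝ × ℝ, pd a (pd b f) q = fderiv ℝ (fderiv ℝ f) q a b := by
    intro a b
    have : fderiv ℝ (fun y => fderiv ℝ f y b) q =
        ((fderiv ℝ (fderiv ℝ f) q).flip) b := by
      rw [show (fun y => fderiv ℝ f y b) = (fun y => (fderiv ℝ f y) ((fun _ => b) y)) from rfl,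
        fderiv_clm_apply hdf' (differentiableAt_const b)]
      simp
    have h1 : pd a (pd b f) q = fderiv ℝ (fun y => fderiv ℝ f y b) q a := rfl
    rw [h1, this]
    rfl
  rw [key v w, key w v]
  exact second_derivative_symmetric (fun y => (hdf y).hasFDerivAt) hdf'.hasFDerivAt v w

lemma pd_periodic {f : ℝ × ℝ → ℝ} {P : ℝ} (hf : Differentiable ℝ f)
    (hp : ∀ q : ℝ × ℝ, f (q + (P, 0)) = f q) (v : ℝ × ℝ) :
    ∀ q : ℝ × ℝ, pd v f (q + (P, 0)) = pd v f q := by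
  intro q
  have he : (fun q' : ℝ × ℝ => f (q' + (P, 0))) = f := funext hp
  have h2 : HasFDerivAt (fun q' : ℝ × ℝ => f (q' + (P, 0)))
      (fderiv ℝ f (q + (P, 0))) q :=
    (hf (q + (P, 0))).hasFDerivAt.comp q ((hasFDerivAt_id q).add_const (P, 0))
  rw [he] at h2
  calc pd v f (q + (P, 0)) = fderiv ℝ f (q + (P, 0)) v := rfl
    _ = fderiv ℝ f q v := by rw [h2.fderiv]
    _ = pd v f q := rfl

noncomputable def pdxIter (f : ℝ × ℝ → ℝ) : ℕ → ℝ × ℝ → ℝ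
  | 0 => f
  | n + 1 => pd (1, 0) (pdxIter f n)

lemma pdxIter_contDiff {f : ℝ × ℝ → ℝ} (hf : ContDiff ℝ (⊤ : ℕ∞) f) :
    ∀ n, ContDiff ℝ (⊤ : ℕ∞) (pdxIter f n)
  | 0 => hf
  | n + 1 => pd_contDiff (pdxIter_contDiff hf n) _

lemma iteratedDeriv_slice {f : ℝ × ℝ → ℝ} (hf : ContDiff ℝ (⊤ : ℕ∞) f) (n : ℕ) (x t : ℝ) :
    iteratedDeriv n (fun x' => f (x', t)) x = pdxIter f n (x, t) := by
  induction n generalizing x with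
  | zero => simp [pdxIter]
  | succ n ih =>
    rw [iteratedDeriv_succ]
    have : iteratedDeriv n (fun x' => f (x', t)) = fun x' => pdxIter f n (x', t) :=
      funext fun x' => ih x'
    rw [this]
    exact (hasDerivAt_slice_x
      (((pdxIter_contDiff hf n).differentiable (by simp)) (x, t))).deriv

noncomputable def kdvU (u : ℝ → ℝ → ℝ) : ℕ → ℝ × ℝ → ℝ := pdxIter (Function.uncurry u)

noncomputable def kdvQ (ε : ℝ) (u : ℝ → ℝ → ℝ) (q : ℝ × ℝ) : ℝ := (((((kdvU u 0 q) ^ 5) / ((5:ℝ))) - (((6 * ε ^ 2) * ((kdvU u 0 q) ^ 2)) * ((kdvU u 1 q) ^ 2))) + (((36 * ε ^ 4 / 5) * (kdvU u 0 q)) * ((kdvU u 2 q) ^ 2))) - ((108 * ε ^ 6 / 35) * ((kdvU u 3 q) ^ 2))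

noncomputable def kdvF (ε : ℝ) (u : ℝ → ℝ → ℝ) (q : ℝ × ℝ) : ℝ := (((((((((((((-(1:ℝ)/6) * ((kdvU u 0 q) ^ 6)) + ((8 * ε ^ 2) * (((kdvU u 0 q) ^ 3) * ((kdvU u 1 q) ^ 2)))) + ((-(ε ^ 2)) * (((kdvU u 0 q) ^ 4) * (kdvU u 2 q)))) + ((3 * ε ^ 4) * ((kdvU u 1 q) ^ 4))) + ((-12 * ε ^ 4) * ((kdvU u 0 q) * (((kdvU u 1 q) ^ 2) * (kdvU u 2 q))))) + ((-66/5 * ε ^ 4) * (((kdvU u 0 q) ^ 2) * ((kdvU u 2 q) ^ 2)))) + ((12 * ε ^ 4) * (((kdvU u 0 q) ^ 2) * ((kdvU u 1 q) * (kdvU u 3 q))))) + ((-36/35 * ε ^ 6) * ((kdvU u 2 q) ^ 3))) + ((72/5 * ε ^ 6) * ((kdvU u 1 q) * ((kdvU u 2 q) * (kdvU u 3 q))))) + ((72/7 * ε ^ 6) * ((kdvU u 0 q) * ((kdvU u 3 q) ^ 2)))) + ((-72/5 * ε ^ 6) * ((kdvU u 0 q) * ((kdvU u 2 q) * (kdvU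 u 4 q))))) + ((-108/35 * ε ^ 8) * ((kdvU u 4 q) ^ 2))) + ((216/35 * ε ^ 8) * ((kdvU u 3 q) * (kdvU u 5 q)))

noncomputable def kdvE (ε : ℝ) (u : ℝ → ℝ → ℝ) (q : ℝ × ℝ) : ℝ := (((((((((((((-(1:ℝ)) * (((kdvU u 0 q) ^ 5) * (kdvU u 1 q))) + ((24 * ε ^ 2) * (((kdvU u 0 q) ^ 2) * ((kdvU u 1 q) ^ 3)))) + ((12 * ε ^ 2) * (((kdvU u 0 q) ^ 3) * ((kdvU u 1 q) * (kdvU u 2 q))))) + ((-(ε ^ 2)) * (((kdvU u 0 q) ^ 4) * (kdvU u 3 q)))) + ((-252/5 * ε ^ 4) * ((kdvU u 0 q) * ((kdvU u 1 q) * ((kdvU u 2 q) ^ 2))))) + ((12 * ε ^ 4) * ((kdvU u 0 q) * (((kdvU u 1 q) ^ 2) * (kdvU u 3 q))))) + ((-72/5 * ε ^ 4) * (((kdvU u 0 q) ^ 2) * ((kdvU u 2 q) * (kdvU u 3 q))))) + ((12 * ε ^ 4) * (((kdvU u 0 q) ^ 2) * ((kdvU u 1 q) * (kdvU u 4 q)))))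 + ((396/35 * ε ^ 6) * (((kdvU u 2 q) ^ 2) * (kdvU u 3 q)))) + ((864/35 * ε ^ 6) * ((kdvU u 1 q) * ((kdvU u 3 q) ^ 2)))) + ((216/35 * ε ^ 6) * ((kdvU u 0 q) * ((kdvU u 3 q) * (kdvU u 4 q))))) + ((-72/5 * ε ^ 6) * ((kdvU u 0 q) * ((kdvU u 2 q) * (kdvU u 5 q))))) + ((216/35 * ε ^ 8) * ((kdvU u 3 q) * (kdvU u 6 q)))

section kdv
variable {ε : ℝ} {u : ℝ → ℝ → ℝ} (hu : ContDiff ℝ (⊤ : ℕ∞) (Function.uncurry u))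

include hu

lemma kdvU_contDiff (n : ℕ) : ContDiff ℝ (⊤ : ℕ∞) (kdvU u n) := pdxIter_contDiff hu n

lemma kdvU_diff (n : ℕ) : Differentiable ℝ (kdvU u n) :=
  (kdvU_contDiff hu n).differentiable (by simp)

lemma kdvU_cont (n : ℕ) : Continuous (kdvU u n) := (kdvU_contDiff hu n).continuous

lemma kdvU_bx (n : ℕ) (x t : ℝ) :
    HasDerivAt (fun x' => kdvU u n (x', t)) (kdvU u (n+1) (x, t)) x :=
  hasDerivAt_slice_x (kdvU_diff hu n (x, t))

lemma kdv_pdt0 (hpde : ∀ x t : ℝ, deriv (fun t' => u x t') t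
      + u x t * deriv (fun x' => u x' t) x
      + ε ^ 2 * iteratedDeriv 3 (fun x' => u x' t) x = 0) :
    ∀ q : ℝ × ℝ, pd (0, 1) (kdvU u 0) q = -(((kdvU u 0 q) * (kdvU u 1 q)) + ((ε ^ 2) * (kdvU u 3 q))) := by
  rintro ⟨x, t⟩
  have h1 : deriv (fun t' => u x t') t = pd (0, 1) (kdvU u 0) (x, t) :=
    (hasDerivAt_slice_t (kdvU_diff hu 0 (x, t))).deriv
  have h2 : deriv (fun x' => u x' t) x = kdvU u 1 (x, t) :=
    (hasDerivAt_slice_x (kdvU_diff hu 0 (x, t))).deriv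
  have h3 : iteratedDeriv 3 (fun x' => u x' t) x = kdvU u 3 (x, t) :=
    iteratedDeriv_slice hu 3 x t
  have h0 : u x t = kdvU u 0 (x, t) := rfl
  have := hpde x t
  rw [h1, h2, h3, h0] at this
  linarith

lemma kdv_pdt1 (hpde : ∀ x t : ℝ, deriv (fun t' => u x t') t
      + u x t * deriv (fun x' => u x' t) x
      + ε ^ 2 * iteratedDeriv 3 (fun x' => u x' t) x = 0) :
    ∀ q : ℝ × ℝ, pd (0, 1) (kdvU u 1) q = -((((kdvU u 1 q) ^ 2) + ((kdvU u 0 q) * (kdvU u 2 q))) + ((ε ^ 2) * (kdvU u 4 q))) := by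
  rintro ⟨x, t⟩
  have hcomm : pd (0, 1) (kdvU u 1) (x, t) = pd (1, 0) (pd (0, 1) (kdvU u 0)) (x, t) :=
    pd_comm (kdvU_contDiff hu 0) _ _ _
  have hfun : pd (0, 1) (kdvU u 0) = fun q => -(((kdvU u 0 q) * (kdvU u 1 q)) + ((ε ^ 2) * (kdvU u 3 q))) :=
    funext (kdv_pdt0 hu hpde)
  have hAdiff : DifferentiableAt ℝ (fun q : ℝ × ℝ => -(((kdvU u 0 q) * (kdvU u 1 q)) + ((ε ^ 2) * (kdvU u 3 q)))) (x, t) := by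
    have hd : ∀ n, Differentiable ℝ (kdvU u n) := kdvU_diff hu
    have hd0 := (hd 0) (x,t); have hd1 := (hd 1) (x,t); have hd2 := (hd 2) (x,t)
    have hd3 := (hd 3) (x,t); have hd4 := (hd 4) (x,t); have hd5 := (hd 5) (x,t)
    have hd6 := (hd 6) (x,t)
    fun_prop
  have hsl : deriv (fun x' => -(((kdvU u 0 (x', t)) * (kdvU u 1 (x', t))) + ((ε ^ 2) * (kdvU u 3 (x', t))))) x
      = pd (1, 0) (fun q : ℝ × ℝ => -(((kdvU u 0 q) * (kdvU u 1 q)) + ((ε ^ 2) * (kdvU u 3 q)))) (x, t) :=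
    (hasDerivAt_slice_x hAdiff).deriv
  have hD : HasDerivAt (fun x' => -(((kdvU u 0 (x', t)) * (kdvU u 1 (x', t))) + ((ε ^ 2) * (kdvU u 3 (x', t))))) _ x :=
    have bx0 := kdvU_bx hu 0 x t
    have bx1 := kdvU_bx hu 1 x t
    have bx2 := kdvU_bx hu 2 x t
    have bx3 := kdvU_bx hu 3 x t
    have bx4 := kdvU_bx hu 4 x t
    (((bx0).mul (bx1)).add (HasDerivAt.const_mul (ε ^ 2) (bx3))).neg
  rw [hcomm, hfun, ← hsl, hD.deriv]
  norm_num
  ring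

lemma kdv_pdt2 (hpde : ∀ x t : ℝ, deriv (fun t' => u x t') t
      + u x t * deriv (fun x' => u x' t) x
      + ε ^ 2 * iteratedDeriv 3 (fun x' => u x' t) x = 0) :
    ∀ q : ℝ × ℝ, pd (0, 1) (kdvU u 2) q = -(((((3:ℝ)) * ((kdvU u 1 q) * (kdvU u 2 q))) + ((kdvU u 0 q) * (kdvU u 3 q))) + ((ε ^ 2) * (kdvU u 5 q))) := by
  rintro ⟨x, t⟩
  have hcomm : pd (0, 1) (kdvU u 2) (x, t) = pd (1, 0) (pd (0, 1) (kdvU u 1)) (x, t) :=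
    pd_comm (kdvU_contDiff hu 1) _ _ _
  have hfun : pd (0, 1) (kdvU u 1) = fun q => -((((kdvU u 1 q) ^ 2) + ((kdvU u 0 q) * (kdvU u 2 q))) + ((ε ^ 2) * (kdvU u 4 q))) :=
    funext (kdv_pdt1 hu hpde)
  have hAdiff : DifferentiableAt ℝ (fun q : ℝ × ℝ => -((((kdvU u 1 q) ^ 2) + ((kdvU u 0 q) * (kdvU u 2 q))) + ((ε ^ 2) * (kdvU u 4 q)))) (x, t) := by
    have hd : ∀ n, Differentiable ℝ (kdvU u n) := kdvU_diff hu
    have hd0 := (hd 0) (x,t); have hd1 := (hd 1) (x,t); have hd2 := (hd 2) (x,t)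
    have hd3 := (hd 3) (x,t); have hd4 := (hd 4) (x,t); have hd5 := (hd 5) (x,t)
    have hd6 := (hd 6) (x,t)
    fun_prop
  have hsl : deriv (fun x' => -((((kdvU u 1 (x', t)) ^ 2) + ((kdvU u 0 (x', t)) * (kdvU u 2 (x', t)))) + ((ε ^ 2) * (kdvU u 4 (x', t))))) x
      = pd (1, 0) (fun q : ℝ × ℝ => -((((kdvU u 1 q) ^ 2) + ((kdvU u 0 q) * (kdvU u 2 q))) + ((ε ^ 2) * (kdvU u 4 q)))) (x, t) :=
    (hasDerivAt_slice_x hAdiff).deriv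
  have hD : HasDerivAt (fun x' => -((((kdvU u 1 (x', t)) ^ 2) + ((kdvU u 0 (x', t)) * (kdvU u 2 (x', t)))) + ((ε ^ 2) * (kdvU u 4 (x', t))))) _ x :=
    have bx0 := kdvU_bx hu 0 x t
    have bx1 := kdvU_bx hu 1 x t
    have bx2 := kdvU_bx hu 2 x t
    have bx3 := kdvU_bx hu 3 x t
    have bx4 := kdvU_bx hu 4 x t
    have bx5 := kdvU_bx hu 5 x t
    ((((bx1).pow 2).add ((bx0).mul (bx2))).add (HasDerivAt.const_mul (ε ^ 2) (bx4))).neg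
  rw [hcomm, hfun, ← hsl, hD.deriv]
  norm_num
  ring

lemma kdv_pdt3 (hpde : ∀ x t : ℝ, deriv (fun t' => u x t') t
      + u x t * deriv (fun x' => u x' t) x
      + ε ^ 2 * iteratedDeriv 3 (fun x' => u x' t) x = 0) :
    ∀ q : ℝ × ℝ, pd (0, 1) (kdvU u 3) q = -((((((3:ℝ)) * ((kdvU u 2 q) ^ 2)) + (((4:ℝ)) * ((kdvU u 1 q) * (kdvU u 3 q)))) + ((kdvU u 0 q) * (kdvU u 4 q))) + ((ε ^ 2) * (kdvU u 6 q))) := by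
  rintro ⟨x, t⟩
  have hcomm : pd (0, 1) (kdvU u 3) (x, t) = pd (1, 0) (pd (0, 1) (kdvU u 2)) (x, t) :=
    pd_comm (kdvU_contDiff hu 2) _ _ _
  have hfun : pd (0, 1) (kdvU u 2) = fun q => -(((((3:ℝ)) * ((kdvU u 1 q) * (kdvU u 2 q))) + ((kdvU u 0 q) * (kdvU u 3 q))) + ((ε ^ 2) * (kdvU u 5 q))) :=
    funext (kdv_pdt2 hu hpde)
  have hAdiff : DifferentiableAt ℝ (fun q : ℝ × ℝ => -(((((3:ℝ)) * ((kdvU u 1 q) * (kdvU u 2 q))) + ((kdvU u 0 q) * (kdvU u 3 q))) + ((ε ^ 2) * (kdvU u 5 q)))) (x, t) := by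
    have hd : ∀ n, Differentiable ℝ (kdvU u n) := kdvU_diff hu
    have hd0 := (hd 0) (x,t); have hd1 := (hd 1) (x,t); have hd2 := (hd 2) (x,t)
    have hd3 := (hd 3) (x,t); have hd4 := (hd 4) (x,t); have hd5 := (hd 5) (x,t)
    have hd6 := (hd 6) (x,t)
    fun_prop
  have hsl : deriv (fun x' => -(((((3:ℝ)) * ((kdvU u 1 (x', t)) * (kdvU u 2 (x', t)))) + ((kdvU u 0 (x', t)) * (kdvU u 3 (x', t)))) + ((ε ^ 2) * (kdvU u 5 (x', t))))) x
      = pd (1, 0) (fun q : ℝ × ℝ => -(((((3:ℝ)) * ((kdvU u 1 q) * (kdvU u 2 q))) + ((kdvU u 0 q) * (kdvU u 3 q))) + ((ε ^ 2) * (kdvU u 5 q)))) (x, t) :=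
    (hasDerivAt_slice_x hAdiff).deriv
  have hD : HasDerivAt (fun x' => -(((((3:ℝ)) * ((kdvU u 1 (x', t)) * (kdvU u 2 (x', t)))) + ((kdvU u 0 (x', t)) * (kdvU u 3 (x', t)))) + ((ε ^ 2) * (kdvU u 5 (x', t))))) _ x :=
    have bx0 := kdvU_bx hu 0 x t
    have bx1 := kdvU_bx hu 1 x t
    have bx2 := kdvU_bx hu 2 x t
    have bx3 := kdvU_bx hu 3 x t
    have bx4 := kdvU_bx hu 4 x t
    have bx5 := kdvU_bx hu 5 x t
    have bx6 := kdvU_bx hu 6 x t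
    (((HasDerivAt.const_mul ((3:ℝ)) ((bx1).mul (bx2))).add ((bx0).mul (bx3))).add (HasDerivAt.const_mul (ε ^ 2) (bx5))).neg
  rw [hcomm, hfun, ← hsl, hD.deriv]
  norm_num
  ring

lemma kdvU_bt0 (hpde : ∀ x t : ℝ, deriv (fun t' => u x t') t
      + u x t * deriv (fun x' => u x' t) x
      + ε ^ 2 * iteratedDeriv 3 (fun x' => u x' t) x = 0) (x t : ℝ) :
    HasDerivAt (fun t' => kdvU u 0 (x, t')) (-(((kdvU u 0 (x, t)) * (kdvU u 1 (x, t))) + ((ε ^ 2) * (kdvU u 3 (x, t))))) t := by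
  have h := hasDerivAt_slice_t (kdvU_diff hu 0 (x, t))
  rwa [kdv_pdt0 hu hpde (x, t)] at h

lemma kdvU_bt1 (hpde : ∀ x t : ℝ, deriv (fun t' => u x t') t
      + u x t * deriv (fun x' => u x' t) x
      + ε ^ 2 * iteratedDeriv 3 (fun x' => u x' t) x = 0) (x t : ℝ) :
    HasDerivAt (fun t' => kdvU u 1 (x, t')) (-((((kdvU u 1 (x, t)) ^ 2) + ((kdvU u 0 (x, t)) * (kdvU u 2 (x, t)))) + ((ε ^ 2) * (kdvU u 4 (x, t))))) t := by
  have h := hasDerivAt_slice_t (kdvU_diff hu 1 (x, t))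
  rwa [kdv_pdt1 hu hpde (x, t)] at h

lemma kdvU_bt2 (hpde : ∀ x t : ℝ, deriv (fun t' => u x t') t
      + u x t * deriv (fun x' => u x' t) x
      + ε ^ 2 * iteratedDeriv 3 (fun x' => u x' t) x = 0) (x t : ℝ) :
    HasDerivAt (fun t' => kdvU u 2 (x, t')) (-(((((3:ℝ)) * ((kdvU u 1 (x, t)) * (kdvU u 2 (x, t)))) + ((kdvU u 0 (x, t)) * (kdvU u 3 (x, t)))) + ((ε ^ 2) * (kdvU u 5 (x, t))))) t := by
  have h := hasDerivAt_slice_t (kdvU_diff hu 2 (x, t))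
  rwa [kdv_pdt2 hu hpde (x, t)] at h

lemma kdvU_bt3 (hpde : ∀ x t : ℝ, deriv (fun t' => u x t') t
      + u x t * deriv (fun x' => u x' t) x
      + ε ^ 2 * iteratedDeriv 3 (fun x' => u x' t) x = 0) (x t : ℝ) :
    HasDerivAt (fun t' => kdvU u 3 (x, t')) (-((((((3:ℝ)) * ((kdvU u 2 (x, t)) ^ 2)) + (((4:ℝ)) * ((kdvU u 1 (x, t)) * (kdvU u 3 (x, t))))) + ((kdvU u 0 (x, t)) * (kdvU u 4 (x, t)))) + ((ε ^ 2) * (kdvU u 6 (x, t))))) t := by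
  have h := hasDerivAt_slice_t (kdvU_diff hu 3 (x, t))
  rwa [kdv_pdt3 hu hpde (x, t)] at h

lemma kdvQ_hasDerivAt_t (hpde : ∀ x t : ℝ, deriv (fun t' => u x t') t
      + u x t * deriv (fun x' => u x' t) x
      + ε ^ 2 * iteratedDeriv 3 (fun x' => u x' t) x = 0) (x t : ℝ) :
    HasDerivAt (fun t' => kdvQ ε u (x, t')) (kdvE ε u (x, t)) t := by
  have bt0 := kdvU_bt0 hu hpde x t
  have bt1 := kdvU_bt1 hu hpde x t
  have bt2 := kdvU_bt2 hu hpde x t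
  have bt3 := kdvU_bt3 hu hpde x t
  have hD : HasDerivAt (fun t' => (((((kdvU u 0 (x, t')) ^ 5) / ((5:ℝ))) - (((6 * ε ^ 2) * ((kdvU u 0 (x, t')) ^ 2)) * ((kdvU u 1 (x, t')) ^ 2))) + (((36 * ε ^ 4 / 5) * (kdvU u 0 (x, t'))) * ((kdvU u 2 (x, t')) ^ 2))) - ((108 * ε ^ 6 / 35) * ((kdvU u 3 (x, t')) ^ 2))) _ t :=
    (((((bt0).pow 5).div_const ((5:ℝ))).sub ((HasDerivAt.const_mul (6 * ε ^ 2) ((bt0).pow 2)).mul ((bt1).pow 2))).add ((HasDerivAt.const_mul (36 * ε ^ 4 / 5) (bt0)).mul ((bt2).pow 2))).sub (HasDerivAt.const_mul (108 * ε ^ 6 / 35) ((bt3).pow 2))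
  have hval : kdvE ε u (x, t) = deriv (fun t' => (((((kdvU u 0 (x, t')) ^ 5) / ((5:ℝ))) - (((6 * ε ^ 2) * ((kdvU u 0 (x, t')) ^ 2)) * ((kdvU u 1 (x, t')) ^ 2))) + (((36 * ε ^ 4 / 5) * (kdvU u 0 (x, t'))) * ((kdvU u 2 (x, t')) ^ 2))) - ((108 * ε ^ 6 / 35) * ((kdvU u 3 (x, t')) ^ 2))) t := by
    rw [hD.deriv]
    unfold kdvE
    norm_num
    ring
  exact hval ▸ hD.differentiableAt.hasDerivAt

lemma kdvF_hasDerivAt_x (x t : ℝ) :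
    HasDerivAt (fun x' => kdvF ε u (x', t)) (kdvE ε u (x, t)) x := by
  have bx0 := kdvU_bx hu 0 x t
  have bx1 := kdvU_bx hu 1 x t
  have bx2 := kdvU_bx hu 2 x t
  have bx3 := kdvU_bx hu 3 x t
  have bx4 := kdvU_bx hu 4 x t
  have bx5 := kdvU_bx hu 5 x t
  have hD : HasDerivAt (fun x' => (((((((((((((-(1:ℝ)/6) * ((kdvU u 0 (x', t)) ^ 6)) + ((8 * ε ^ 2) * (((kdvU u 0 (x', t)) ^ 3) * ((kdvU u 1 (x', t)) ^ 2)))) + ((-(ε ^ 2)) * (((kdvU u 0 (x', t)) ^ 4) * (kdvU u 2 (x', t))))) + ((3 * ε ^ 4) * ((kdvU u 1 (x', t)) ^ 4))) + ((-12 * ε ^ 4) * ((kdvU u 0 (x', t)) * (((kdvU u 1 (x', t)) ^ 2) * (kdvU u 2 (x', t)))))) + ((-66/5 * ε ^ 4) * (((kdvU u 0 (x', t)) ^ 2) * ((kdvU u 2 (x', t)) ^ 2)))) + ((12 * ε ^ 4) * (((kdvU u 0 (x', t)) ^ 2) * ((kdvU u 1 (x', t)) * (kdvU u 3 (x', t))))))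 + ((-36/35 * ε ^ 6) * ((kdvU u 2 (x', t)) ^ 3))) + ((72/5 * ε ^ 6) * ((kdvU u 1 (x', t)) * ((kdvU u 2 (x', t)) * (kdvU u 3 (x', t)))))) + ((72/7 * ε ^ 6) * ((kdvU u 0 (x', t)) * ((kdvU u 3 (x', t)) ^ 2)))) + ((-72/5 * ε ^ 6) * ((kdvU u 0 (x', t)) * ((kdvU u 2 (x', t)) * (kdvU u 4 (x', t)))))) + ((-108/35 * ε ^ 8) * ((kdvU u 4 (x', t)) ^ 2))) + ((216/35 * ε ^ 8) * ((kdvU u 3 (x', t)) * (kdvU u 5 (x', t))))) _ x :=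
    ((((((((((((HasDerivAt.const_mul (-(1:ℝ)/6) ((bx0).pow 6)).add (HasDerivAt.const_mul (8 * ε ^ 2) (((bx0).pow 3).mul ((bx1).pow 2)))).add (HasDerivAt.const_mul (-(ε ^ 2)) (((bx0).pow 4).mul (bx2)))).add (HasDerivAt.const_mul (3 * ε ^ 4) ((bx1).pow 4))).add (HasDerivAt.const_mul (-12 * ε ^ 4) ((bx0).mul (((bx1).pow 2).mul (bx2))))).add (HasDerivAt.const_mul (-66/5 * ε ^ 4) (((bx0).pow 2).mul ((bx2).pow 2)))).add (HasDerivAt.const_mul (12 * ε ^ 4) (((bx0).pow 2).mul ((bx1).mul (bx3))))).add (HasDerivAt.const_mul (-36/35 * ε ^ 6) ((bx2).pow 3))).add (HasDerivAt.const_mul (72/5 * ε ^ 6) ((bx1).mul ((bx2).mul (bx3))))).add (HasDerivAt.const_mul (72/7 * ε ^ 6) ((bx0).mul ((bx3).pow 2)))).add (HasDerivAt.const_mul (-72/5 * ε ^ 6) ((bx0).mul ((bx2).mul (bx4))))).add (HasDerivAt.const_mul (-108/35 * ε ^ 8) ((bx4).pow 2))).add (HasDerivAt.const_mul (216/35 *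 ε ^ 8) ((bx3).mul (bx5)))
  have hval : kdvE ε u (x, t) = deriv (fun x' => (((((((((((((-(1:ℝ)/6) * ((kdvU u 0 (x', t)) ^ 6)) + ((8 * ε ^ 2) * (((kdvU u 0 (x', t)) ^ 3) * ((kdvU u 1 (x', t)) ^ 2)))) + ((-(ε ^ 2)) * (((kdvU u 0 (x', t)) ^ 4) * (kdvU u 2 (x', t))))) + ((3 * ε ^ 4) * ((kdvU u 1 (x', t)) ^ 4))) + ((-12 * ε ^ 4) * ((kdvU u 0 (x', t)) * (((kdvU u 1 (x', t)) ^ 2) * (kdvU u 2 (x', t)))))) + ((-66/5 * ε ^ 4) * (((kdvU u 0 (x', t)) ^ 2) * ((kdvU u 2 (x', t)) ^ 2)))) + ((12 * ε ^ 4) * (((kdvU u 0 (x', t)) ^ 2) * ((kdvU u 1 (x', t)) * (kdvU u 3 (x', t)))))) + ((-36/35 * ε ^ 6) * ((kdvU u 2 (x', t)) ^ 3))) + ((72/5 * ε ^ 6) * ((kdvU u 1 (x', t)) * ((kdvU u 2 (x', t)) * (kdvU u 3 (x', t)))))) + ((72/7 * ε ^ 6) * ((kdvU u 0 (x', t)) *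 ((kdvU u 3 (x', t)) ^ 2)))) + ((-72/5 * ε ^ 6) * ((kdvU u 0 (x', t)) * ((kdvU u 2 (x', t)) * (kdvU u 4 (x', t)))))) + ((-108/35 * ε ^ 8) * ((kdvU u 4 (x', t)) ^ 2))) + ((216/35 * ε ^ 8) * ((kdvU u 3 (x', t)) * (kdvU u 5 (x', t))))) x := by
    rw [hD.deriv]
    unfold kdvE
    norm_num
    ring
  exact hval ▸ hD.differentiableAt.hasDerivAt

lemma kdvQ_cont : Continuous (kdvQ ε u) := by
  have hc : ∀ n, Continuous (kdvU u n) := kdvU_cont hu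
  have h0 := hc 0; have h1 := hc 1; have h2 := hc 2; have h3 := hc 3
  unfold kdvQ; fun_prop

lemma kdvE_cont : Continuous (kdvE ε u) := by
  have hc : ∀ n, Continuous (kdvU u n) := kdvU_cont hu
  have h0 := hc 0; have h1 := hc 1; have h2 := hc 2; have h3 := hc 3
  have h4 := hc 4; have h5 := hc 5; have h6 := hc 6
  unfold kdvE; fun_prop

lemma kdvU_periodic {P : ℝ} (hper : ∀ x t : ℝ, u (x + P) t = u x t) :
    ∀ (n : ℕ) (x t : ℝ), kdvU u n (x + P, t) = kdvU u n (x, t) := by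
  intro n
  induction n with
  | zero => exact fun x t => hper x t
  | succ n ih =>
    intro x t
    have hp : ∀ q : ℝ × ℝ, kdvU u n (q + (P, 0)) = kdvU u n q := by
      rintro ⟨a, b⟩
      have : ((a, b) : ℝ × ℝ) + (P, 0) = (a + P, b) := by
        simp [Prod.ext_iff]
      rw [this]
      exact ih a b
    have := pd_periodic (kdvU_diff hu n) hp (1, 0) (x, t)
    have hq : ((x, t) : ℝ × ℝ) + (P, 0) = (x + P, t) := by simp [Prod.ext_iff]
    rw [hq] at this
    exact this

end kdv

/-- Conservation of the fifth Kruskal invariant for periodic KdV with `α = 1`. -/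
theorem kdv_periodic_fifth_invariant_conservation (ε P : ℝ) (hP : 0 < P) (u : ℝ → ℝ → ℝ)
    (hu : ContDiff ℝ (⊤ : ℕ∞) (Function.uncurry u))
    (hper : ∀ x t : ℝ, u (x + P) t = u x t)
    (hpde : ∀ x t : ℝ, deriv (fun t' => u x t') t
      + u x t * deriv (fun x' => u x' t) x
      + ε ^ 2 * iteratedDeriv 3 (fun x' => u x' t) x = 0) :
    ∀ t₁ t₂ : ℝ,
      (∫ x in (0:ℝ)..P, ((u x t₁) ^ 5 / 5
        - 6 * ε ^ 2 * (u x t₁) ^ 2 * (deriv (fun x' => u x' t₁) x) ^ 2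
        + 36 * ε ^ 4 / 5 * u x t₁ * (iteratedDeriv 2 (fun x' => u x' t₁) x) ^ 2
        - 108 * ε ^ 6 / 35 * (iteratedDeriv 3 (fun x' => u x' t₁) x) ^ 2))
      = ∫ x in (0:ℝ)..P, ((u x t₂) ^ 5 / 5
        - 6 * ε ^ 2 * (u x t₂) ^ 2 * (deriv (fun x' => u x' t₂) x) ^ 2
        + 36 * ε ^ 4 / 5 * u x t₂ * (iteratedDeriv 2 (fun x' => u x' t₂) x) ^ 2
        - 108 * ε ^ 6 / 35 * (iteratedDeriv 3 (fun x' => u x' t₂) x) ^ 2) := by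
  intro t₁ t₂
  -- rewrite the integrand
  have hGeq : ∀ t : ℝ, (∫ x in (0:ℝ)..P, ((u x t) ^ 5 / 5
        - 6 * ε ^ 2 * (u x t) ^ 2 * (deriv (fun x' => u x' t) x) ^ 2
        + 36 * ε ^ 4 / 5 * u x t * (iteratedDeriv 2 (fun x' => u x' t) x) ^ 2
        - 108 * ε ^ 6 / 35 * (iteratedDeriv 3 (fun x' => u x' t) x) ^ 2))
      = ∫ x in (0:ℝ)..P, kdvQ ε u (x, t) := by
    intro t
    apply intervalIntegral.integral_congr
    intro x _
    have h1 : deriv (fun x' => u x' t) x = kdvU u 1 (x, t) :=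
      (hasDerivAt_slice_x (kdvU_diff hu 0 (x, t))).deriv
    have h2 : iteratedDeriv 2 (fun x' => u x' t) x = kdvU u 2 (x, t) :=
      iteratedDeriv_slice hu 2 x t
    have h3 : iteratedDeriv 3 (fun x' => u x' t) x = kdvU u 3 (x, t) :=
      iteratedDeriv_slice hu 3 x t
    have h0 : u x t = kdvU u 0 (x, t) := rfl
    simp only [h1, h2, h3, h0]
    unfold kdvQ
    ring
  rw [hGeq t₁, hGeq t₂]
  -- flux integral vanishes
  have hflux : ∀ t : ℝ, (∫ x in (0:ℝ)..P, kdvE ε u (x, t)) = 0 := by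
    intro t
    have hInt : IntervalIntegrable (fun x => kdvE ε u (x, t)) MeasureTheory.volume 0 P :=
      ((kdvE_cont hu).comp (continuous_id.prodMk continuous_const)).intervalIntegrable 0 P
    rw [intervalIntegral.integral_eq_sub_of_hasDerivAt
      (fun x _ => kdvF_hasDerivAt_x hu x t) hInt]
    have hper' : ∀ k, kdvU u k (P, t) = kdvU u k (0, t) := by
      intro k
      have := kdvU_periodic hu hper k 0 t
      rwa [zero_add] at this
    unfold kdvF
    rw [hper' 0, hper' 1, hper' 2, hper' 3, hper' 4, hper' 5]
    ring
  -- derivative of the invariant is zero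
  have hG : ∀ t₀ : ℝ, HasDerivAt (fun t => ∫ x in (0:ℝ)..P, kdvQ ε u (x, t)) 0 t₀ := by
    intro t₀
    have hEc : Continuous (kdvE ε u) := kdvE_cont hu
    obtain ⟨C, hC⟩ := ((isCompact_uIcc (a := (0:ℝ)) (b := P)).prod
      (isCompact_Icc (a := t₀ - 1) (b := t₀ + 1))).exists_bound_of_continuousOn
      hEc.continuousOn
    have key := intervalIntegral.hasDerivAt_integral_of_dominated_loc_of_deriv_le
      (F := fun τ x => kdvQ ε u (x, τ)) (F' := fun τ x => kdvE ε u (x, τ))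
      (x₀ := t₀) (a := (0:ℝ)) (b := P) (μ := MeasureTheory.volume)
      (bound := fun _ => C) (s := Metric.ball t₀ 1) (Metric.ball_mem_nhds t₀ one_pos)
      (Filter.Eventually.of_forall fun τ =>
        (((kdvQ_cont hu).comp (continuous_id.prodMk continuous_const)).aestronglyMeasurable))
      (((kdvQ_cont hu).comp (continuous_id.prodMk continuous_const)).intervalIntegrable 0 P)
      ((hEc.comp (continuous_id.prodMk continuous_const)).aestronglyMeasurable)
      (Filter.Eventually.of_forall fun x hx τ hτ => by
        apply hC (x, τ)
        refine Set.mem_prod.2 ⟨Set.Ioc_subset_Icc_self hx, ?_⟩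
        rw [Metric.mem_ball, Real.dist_eq] at hτ
        have := abs_lt.1 hτ
        exact ⟨by linarith [this.1], by linarith [this.2]⟩)
      (intervalIntegrable_const)
      (Filter.Eventually.of_forall fun x hx τ hτ => kdvQ_hasDerivAt_t hu hpde x τ)
    have h2 := key.2
    rwa [hflux t₀] at h2
  exact is_const_of_deriv_eq_zero (fun t => (hG t).differentiableAt)
    (fun t => (hG t).deriv) t₁ t₂
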